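/- Let A be an abelian group and f, g : A → ℤ surjective homomorphisms. If ker f is finitely generated, then ker f is isomorphic to ker g. -/

import Mathlib

/-!
Write `K = ker f` and `L = ker g`. If `K ≤ L`, then `g` factors through `f`, i.e. `g = g(a) • f`
for any `a` with `f a = 1`, so `K = L`. Otherwise `g` is nonzero on `K`; its image is a nonzero,
hence infinite cyclic, subgroup of `ℤ`, so `K` splits as `(K ⊓ L) × ℤ`. Symmetrically
`L ≃+ (K ⊓ L) × ℤ`, and the two splittings combine to `K ≃+ L`.
-/

open Function

theorem AddSubgroup.nonempty_addEquiv_int_of_ne_bot (H : AddSubgroup ℤ) (hH : H ≠ ⊥) :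
    Nonempty (H ≃+ ℤ) := by
  obtain ⟨d, rfl⟩ := Int.subgroup_cyclic H
  rw [← zmultiples_eq_closure] at hH ⊢
  have hd : d ≠ 0 := by rintro rfl; simp at hH
  have hinj : Injective (zmultiplesHom ℤ d) := fun m n h => by simpa [hd] using h
  exact ⟨((AddMonoidHom.ofInjective hinj).trans
    (AddEquiv.addSubgroupCongr (range_zmultiplesHom d))).symm⟩

namespace AddMonoidHom

variable {M N : Type*} [AddCommGroup M] [AddCommGroup N]

theorem ne_zero_of_surjective [Nontrivial N] {ψ : M →+ N} (hψ : Surjective ψ) : ψ ≠ 0 := by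
  obtain ⟨y, hy⟩ := exists_ne (0 : N)
  obtain ⟨x, rfl⟩ := hψ y
  rintro rfl
  exact hy rfl

def addEquivKerProdOfRightInverse (ψ : M →+ N) (s : N →+ M) (hs : ∀ n, ψ (s n) = n) :
    M ≃+ ψ.ker × N where
  toFun x := (⟨x - s (ψ x), by simp [mem_ker, hs]⟩, ψ x)
  invFun p := p.1 + s p.2
  left_inv x := by simp
  right_inv := by
    rintro ⟨⟨k, hk⟩, n⟩
    simp [(mem_ker).1 hk, hs]
  map_add' x y := by
    ext <;> simp only [map_add, AddSubgroup.coe_add, Prod.fst_add, Prod.snd_add]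
    abel

theorem nonempty_addEquiv_ker_prod_int_of_surjective (ψ : M →+ ℤ) (hψ : Surjective ψ) :
    Nonempty (M ≃+ ψ.ker × ℤ) := by
  obtain ⟨a, ha⟩ := hψ 1
  exact ⟨ψ.addEquivKerProdOfRightInverse (zmultiplesHom M a) fun n => by simp [ha]⟩

theorem nonempty_addEquiv_ker_prod_int_of_ne_zero (ψ : M →+ ℤ) (hψ : ψ ≠ 0) :
    Nonempty (M ≃+ ψ.ker × ℤ) := by
  obtain ⟨e⟩ := ψ.range.nonempty_addEquiv_int_of_ne_bot (by rwa [Ne, range_eq_bot_iff])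
  let φ : M →+ ℤ := (e : ψ.range →+ ℤ).comp ψ.rangeRestrict
  have hφ : Surjective φ := e.surjective.comp ψ.rangeRestrict_surjective
  have hker : φ.ker = ψ.ker := by rw [ker_addEquiv_comp, ker_rangeRestrict]
  obtain ⟨e'⟩ := φ.nonempty_addEquiv_ker_prod_int_of_surjective hφ
  exact ⟨e'.trans (AddEquiv.prodCongr (AddEquiv.addSubgroupCongr hker) (AddEquiv.refl ℤ))⟩

theorem ker_eq_of_ker_le_of_int {f g : M →+ ℤ} (hf : Surjective f) (hg : g ≠ 0)
    (hle : f.ker ≤ g.ker) : f.ker = g.ker := by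
  obtain ⟨a, ha⟩ := hf 1
  have hfactor : ∀ x, g x = f x * g a := fun x => by
    have : x - f x • a ∈ g.ker := hle (by simp [mem_ker, ha])
    simpa [sub_eq_zero] using this
  have hga : g a ≠ 0 := fun h0 => hg (ext fun x => by simp [hfactor x, h0])
  refine le_antisymm hle fun x hx => ?_
  rw [mem_ker, hfactor, mul_eq_zero] at hx
  exact hx.resolve_right hga

end AddMonoidHom

theorem AddSubgroup.nonempty_addEquiv_inf_ker_prod_int {A : Type*} [AddCommGroup A]
    (K : AddSubgroup A) (g : A →+ ℤ) (hK : ¬K ≤ g.ker) :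
    Nonempty (K ≃+ ↥(K ⊓ g.ker) × ℤ) := by
  have hres : g.comp K.subtype ≠ 0 := fun h0 => hK fun x hx => by
    simpa using DFunLike.congr_fun h0 ⟨x, hx⟩
  have hker : (g.comp K.subtype).ker = (K ⊓ g.ker).addSubgroupOf K := by
    rw [← AddMonoidHom.comap_ker, inf_addSubgroupOf_left]
    rfl
  obtain ⟨e⟩ := (g.comp K.subtype).nonempty_addEquiv_ker_prod_int_of_ne_zero hres
  exact ⟨e.trans (AddEquiv.prodCongr ((AddEquiv.addSubgroupCongr hker).trans
    (addSubgroupOfEquivOfLe inf_le_left)) (AddEquiv.refl ℤ))⟩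

theorem stmt4_general (A : Type*) [AddCommGroup A] (f g : A →+ ℤ)
    (hf : Function.Surjective f) (hg : Function.Surjective g) :
    Nonempty (f.ker ≃+ g.ker) := by
  by_cases hKL : f.ker ≤ g.ker
  · exact ⟨.addSubgroupCongr (f.ker_eq_of_ker_le_of_int hf (g.ne_zero_of_surjective hg) hKL)⟩
  by_cases hLK : g.ker ≤ f.ker
  · exact ⟨.addSubgroupCongr
      (g.ker_eq_of_ker_le_of_int hg (f.ne_zero_of_surjective hf) hLK).symm⟩
  obtain ⟨eK⟩ := f.ker.nonempty_addEquiv_inf_ker_prod_int g hKL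
  obtain ⟨eL⟩ := g.ker.nonempty_addEquiv_inf_ker_prod_int f hLK
  exact ⟨eK.trans
    ((AddEquiv.prodCongr (.addSubgroupCongr (inf_comm _ _)) (.refl ℤ)).trans eL.symm)⟩

theorem stmt4 (A : Type*) [AddCommGroup A] (f g : A →+ ℤ)
    (hf : Function.Surjective f) (hg : Function.Surjective g)
    (h : f.ker.FG) : Nonempty (f.ker ≃+ g.ker) :=
  stmt4_general A f g hf hg
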